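/- For all real numbers s, t, ϑ, let C = exp(t·p₁) · R_{ϑ/2} · exp(s·f₁), where exp denotes the matrix exponential. Then tr( R_{2π/3} · (C Cᵀ) · R_{2π/3} · (C Cᵀ)⁻¹ ) = −(3/2)·cosh(2s)·cosh(2t) + (9/4)·cosh²(2s) − 3/4 − 3·sin²(ϑ)·sinh⁴(s)·sinh²(t). -/

import Mathlib

open Matrix Real

/-- The rotation matrix `R_θ`. -/
noncomputable def R (θ : ℝ) : Matrix (Fin 3) (Fin 3) ℝ :=
  !![1, 0, 0; 0, Real.cos θ, -Real.sin θ; 0, Real.sin θ, Real.cos θ]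

noncomputable def p₁ : Matrix (Fin 3) (Fin 3) ℝ := !![0, 0, 0; 0, 1/2, 0; 0, 0, -(1/2)]

def f₁ : Matrix (Fin 3) (Fin 3) ℝ := !![0, 1, 0; 1, 0, 0; 0, 0, 0]

lemma exp_p_aux (t : ℝ) : NormedSpace.exp (t • p₁) =
    !![1,0,0; 0, Real.exp (t/2), 0; 0, 0, Real.exp (-(t/2))] := by
  have h : t • p₁ = diagonal ![0, t/2, -(t/2)] := by
    ext i j; fin_cases i <;> fin_cases j <;>
      simp [p₁, diagonal, Matrix.smul_apply, Matrix.vecHead, Matrix.vecTail] <;> ring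
  rw [h, Matrix.exp_diagonal]
  ext i j; fin_cases i <;> fin_cases j <;>
    simp [diagonal, Matrix.vecHead, Matrix.vecTail, ← Real.exp_eq_exp_ℝ]

noncomputable def Paux : Matrix (Fin 3) (Fin 3) ℝ :=
  !![Real.sqrt 2/2, Real.sqrt 2/2, 0; Real.sqrt 2/2, -(Real.sqrt 2/2), 0; 0, 0, 1]

lemma hPP_aux : Paux * Paux = 1 := by
  ext i j; fin_cases i <;> fin_cases j <;>
    simp [Paux, Matrix.mul_apply, Fin.sum_univ_three, Matrix.one_apply] <;>
    first | ring1 | ((try ring_nf); rw [Real.sq_sqrt (by norm_num : (0:ℝ) ≤ 2)]; ring)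

lemma exp_f_aux (s : ℝ) : NormedSpace.exp (s • f₁) =
    !![Real.cosh s, Real.sinh s, 0; Real.sinh s, Real.cosh s, 0; 0, 0, 1] := by
  have hPinv : Paux⁻¹ = Paux := (Matrix.inv_eq_right_inv hPP_aux)
  have hUnit : IsUnit Paux := (Matrix.isUnit_iff_isUnit_det _).2 (Matrix.isUnit_det_of_right_inverse hPP_aux)
  have hconj : s • f₁ = Paux * diagonal ![s, -s, 0] * Paux⁻¹ := by
    rw [hPinv]
    ext i j; fin_cases i <;> fin_cases j <;>
      simp [Paux, f₁, diagonal, Matrix.mul_apply, Fin.sum_univ_three, Matrix.smul_apply,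
        Matrix.vecHead, Matrix.vecTail] <;>
      first | ring1 | ((try ring_nf); rw [Real.sq_sqrt (by norm_num : (0:ℝ) ≤ 2)]; ring)
  rw [hconj, Matrix.exp_conj Paux (diagonal ![s, -s, 0]) hUnit, Matrix.exp_diagonal, hPinv]
  ext i j
  have e0 : NormedSpace.exp (0:ℝ) = 1 := by rw [← Real.exp_eq_exp_ℝ, Real.exp_zero]
  fin_cases i <;> fin_cases j <;>
    simp [Paux, diagonal, Matrix.mul_apply, Fin.sum_univ_three, Matrix.vecHead, Matrix.vecTail,
      ← Real.exp_eq_exp_ℝ, Real.cosh_eq, Real.sinh_eq, e0] <;>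
    first | ring1 | ((try ring_nf); rw [Real.sq_sqrt (by norm_num : (0:ℝ) ≤ 2)]; ring)

set_option maxHeartbeats 3200000 in
/-- The explicit trace computation underlying Proposition 4.4. -/
theorem trace_peripheral_explicit (s t ϑ : ℝ)
    (C : Matrix (Fin 3) (Fin 3) ℝ)
    (hC : C = NormedSpace.exp (t • p₁) * R (ϑ/2) * NormedSpace.exp (s • f₁)) :
    (R (2*π/3) * (C * Cᵀ) * R (2*π/3) * (C * Cᵀ)⁻¹).trace =
      -(3/2) * Real.cosh (2*s) * Real.cosh (2*t) + (9/4) * Real.cosh (2*s)^2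
        - 3/4 - 3 * Real.sin ϑ^2 * Real.sinh s^4 * Real.sinh t^2 := by
  have hcd : Real.cos (ϑ/2)^2 + Real.sin (ϑ/2)^2 = 1 := Real.cos_sq_add_sin_sq _
  have huU : rexp (t/2) * rexp (-(t/2)) = 1 := by
    rw [← Real.exp_add]; norm_num
  have hvV : rexp s * rexp (-s) = 1 := by
    rw [← Real.exp_add]; norm_num
  have hcosP : Real.cos (2*π/3) = -(1/2) := by
    rw [show (2*π/3 : ℝ) = π - π/3 by ring, Real.cos_pi_sub, Real.cos_pi_div_three]
  have hq : Real.sin (2*π/3)^2 = 3/4 := by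
    have h := Real.sin_sq_add_cos_sq (2*π/3)
    rw [hcosP] at h; nlinarith [h]
  have hsin : Real.sin ϑ = 2 * Real.sin (ϑ/2) * Real.cos (ϑ/2) := by
    have h := Real.sin_two_mul (ϑ/2)
    rw [show 2*(ϑ/2) = ϑ by ring] at h
    rw [h]
  have e2s : rexp (2*s) = rexp s * rexp s := by rw [← Real.exp_add]; congr 1; ring
  have e2s' : rexp (-(2*s)) = rexp (-s) * rexp (-s) := by rw [← Real.exp_add]; congr 1; ring
  have e2t : rexp (2*t) = rexp (t/2) * rexp (t/2) * rexp (t/2) * rexp (t/2) := by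
    rw [← Real.exp_add, ← Real.exp_add, ← Real.exp_add]; congr 1; ring
  have e2t' : rexp (-(2*t)) = rexp (-(t/2)) * rexp (-(t/2)) * rexp (-(t/2)) * rexp (-(t/2)) := by
    rw [← Real.exp_add, ← Real.exp_add, ← Real.exp_add]; congr 1; ring
  have et : rexp t = rexp (t/2) * rexp (t/2) := by rw [← Real.exp_add]; congr 1; ring
  have et' : rexp (-t) = rexp (-(t/2)) * rexp (-(t/2)) := by rw [← Real.exp_add]; congr 1; ring
  have hCl : C =
    !![((1/2)*rexp (-s) + (1/2)*rexp s), ((-1/2)*rexp (-s) + (1/2)*rexp s), (0);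
      ((-1/2)*rexp (t/2)*rexp (-s)*Real.cos (ϑ/2) + (1/2)*rexp (t/2)*rexp s*Real.cos (ϑ/2)), ((1/2)*rexp (t/2)*rexp (-s)*Real.cos (ϑ/2) + (1/2)*rexp (t/2)*rexp s*Real.cos (ϑ/2)), ((-1)*rexp (t/2)*Real.sin (ϑ/2));
      ((-1/2)*rexp (-(t/2))*rexp (-s)*Real.sin (ϑ/2) + (1/2)*rexp (-(t/2))*rexp s*Real.sin (ϑ/2)), ((1/2)*rexp (-(t/2))*rexp (-s)*Real.sin (ϑ/2) + (1/2)*rexp (-(t/2))*rexp s*Real.sin (ϑ/2)), ((1)*rexp (-(t/2))*Real.cos (ϑ/2))] := by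
    rw [hC, exp_p_aux, exp_f_aux]
    ext i j; fin_cases i <;> fin_cases j <;>
      simp [R, Matrix.mul_apply, Fin.sum_univ_three,
        Real.cosh_eq, Real.sinh_eq, Matrix.vecHead, Matrix.vecTail] <;> ring
  have hM : C * Cᵀ =
    !![((1/2)*rexp (-s)^2 + (1/2)*rexp s^2), ((-1/2)*rexp (t/2)*rexp (-s)^2*Real.cos (ϑ/2) + (1/2)*rexp (t/2)*rexp s^2*Real.cos (ϑ/2)), ((-1/2)*rexp (-(t/2))*rexp (-s)^2*Real.sin (ϑ/2) + (1/2)*rexp (-(t/2))*rexp s^2*Real.sin (ϑ/2));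
      ((-1/2)*rexp (t/2)*rexp (-s)^2*Real.cos (ϑ/2) + (1/2)*rexp (t/2)*rexp s^2*Real.cos (ϑ/2)), ((1)*rexp (t/2)^2*Real.sin (ϑ/2)^2 + (1/2)*rexp (t/2)^2*rexp (-s)^2*Real.cos (ϑ/2)^2 + (1/2)*rexp (t/2)^2*rexp s^2*Real.cos (ϑ/2)^2), ((-1)*rexp (t/2)*rexp (-(t/2))*Real.cos (ϑ/2)*Real.sin (ϑ/2) + (1/2)*rexp (t/2)*rexp (-(t/2))*rexp (-s)^2*Real.cos (ϑ/2)*Real.sin (ϑ/2) + (1/2)*rexp (t/2)*rexp (-(t/2))*rexp s^2*Real.cos (ϑ/2)*Real.sin (ϑ/2));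
      ((-1/2)*rexp (-(t/2))*rexp (-s)^2*Real.sin (ϑ/2) + (1/2)*rexp (-(t/2))*rexp s^2*Real.sin (ϑ/2)), ((-1)*rexp (t/2)*rexp (-(t/2))*Real.cos (ϑ/2)*Real.sin (ϑ/2) + (1/2)*rexp (t/2)*rexp (-(t/2))*rexp (-s)^2*Real.cos (ϑ/2)*Real.sin (ϑ/2) + (1/2)*rexp (t/2)*rexp (-(t/2))*rexp s^2*Real.cos (ϑ/2)*Real.sin (ϑ/2)), ((1)*rexp (-(t/2))^2*Real.cos (ϑ/2)^2 + (1/2)*rexp (-(t/2))^2*rexp (-s)^2*Real.sin (ϑ/2)^2 + (1/2)*rexp (-(t/2))^2*rexp s^2*Real.sin (ϑ/2)^2)] := by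
    rw [hCl]
    ext i j; fin_cases i <;> fin_cases j <;>
      simp [Matrix.mul_apply, Matrix.transpose_apply, Fin.sum_univ_three,
        Matrix.vecHead, Matrix.vecTail] <;> ring
  have hN1 :
    (!![((1/2)*rexp (-s)^2 + (1/2)*rexp s^2), ((-1/2)*rexp (t/2)*rexp (-s)^2*Real.cos (ϑ/2) + (1/2)*rexp (t/2)*rexp s^2*Real.cos (ϑ/2)), ((-1/2)*rexp (-(t/2))*rexp (-s)^2*Real.sin (ϑ/2) + (1/2)*rexp (-(t/2))*rexp s^2*Real.sin (ϑ/2));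
      ((-1/2)*rexp (t/2)*rexp (-s)^2*Real.cos (ϑ/2) + (1/2)*rexp (t/2)*rexp s^2*Real.cos (ϑ/2)), ((1)*rexp (t/2)^2*Real.sin (ϑ/2)^2 + (1/2)*rexp (t/2)^2*rexp (-s)^2*Real.cos (ϑ/2)^2 + (1/2)*rexp (t/2)^2*rexp s^2*Real.cos (ϑ/2)^2), ((-1)*rexp (t/2)*rexp (-(t/2))*Real.cos (ϑ/2)*Real.sin (ϑ/2) + (1/2)*rexp (t/2)*rexp (-(t/2))*rexp (-s)^2*Real.cos (ϑ/2)*Real.sin (ϑ/2) + (1/2)*rexp (t/2)*rexp (-(t/2))*rexp s^2*Real.cos (ϑ/2)*Real.sin (ϑ/2));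
      ((-1/2)*rexp (-(t/2))*rexp (-s)^2*Real.sin (ϑ/2) + (1/2)*rexp (-(t/2))*rexp s^2*Real.sin (ϑ/2)), ((-1)*rexp (t/2)*rexp (-(t/2))*Real.cos (ϑ/2)*Real.sin (ϑ/2) + (1/2)*rexp (t/2)*rexp (-(t/2))*rexp (-s)^2*Real.cos (ϑ/2)*Real.sin (ϑ/2) + (1/2)*rexp (t/2)*rexp (-(t/2))*rexp s^2*Real.cos (ϑ/2)*Real.sin (ϑ/2)), ((1)*rexp (-(t/2))^2*Real.cos (ϑ/2)^2 + (1/2)*rexp (-(t/2))^2*rexp (-s)^2*Real.sin (ϑ/2)^2 + (1/2)*rexp (-(t/2))^2*rexp s^2*Real.sin (ϑ/2)^2)]) *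
    (!![((1/2)*rexp (-s)^2 + (1/2)*rexp s^2), ((1/2)*rexp (-(t/2))*rexp (-s)^2*Real.cos (ϑ/2) + (-1/2)*rexp (-(t/2))*rexp s^2*Real.cos (ϑ/2)), ((1/2)*rexp (t/2)*rexp (-s)^2*Real.sin (ϑ/2) + (-1/2)*rexp (t/2)*rexp s^2*Real.sin (ϑ/2));
      ((1/2)*rexp (-(t/2))*rexp (-s)^2*Real.cos (ϑ/2) + (-1/2)*rexp (-(t/2))*rexp s^2*Real.cos (ϑ/2)), ((1)*rexp (-(t/2))^2*Real.sin (ϑ/2)^2 + (1/2)*rexp (-(t/2))^2*rexp (-s)^2*Real.cos (ϑ/2)^2 + (1/2)*rexp (-(t/2))^2*rexp s^2*Real.cos (ϑ/2)^2), ((-1)*rexp (t/2)*rexp (-(t/2))*Real.cos (ϑ/2)*Real.sin (ϑ/2) + (1/2)*rexp (t/2)*rexp (-(t/2))*rexp (-s)^2*Real.cos (ϑ/2)*Real.sin (ϑ/2) + (1/2)*rexp (t/2)*rexp (-(t/2))*rexp s^2*Real.cos (ϑ/2)*Real.sin (ϑ/2));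
      ((1/2)*rexp (t/2)*rexp (-s)^2*Real.sin (ϑ/2) + (-1/2)*rexp (t/2)*rexp s^2*Real.sin (ϑ/2)), ((-1)*rexp (t/2)*rexp (-(t/2))*Real.cos (ϑ/2)*Real.sin (ϑ/2) + (1/2)*rexp (t/2)*rexp (-(t/2))*rexp (-s)^2*Real.cos (ϑ/2)*Real.sin (ϑ/2) + (1/2)*rexp (t/2)*rexp (-(t/2))*rexp s^2*Real.cos (ϑ/2)*Real.sin (ϑ/2)), ((1)*rexp (t/2)^2*Real.cos (ϑ/2)^2 + (1/2)*rexp (t/2)^2*rexp (-s)^2*Real.sin (ϑ/2)^2 + (1/2)*rexp (t/2)^2*rexp s^2*Real.sin (ϑ/2)^2)]) = 1 := by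
    have hq3 := hq
    ext i j; fin_cases i <;> fin_cases j <;>
      simp [Matrix.mul_apply, Fin.sum_univ_three, Matrix.one_apply,
        Matrix.vecHead, Matrix.vecTail] <;>
      first
      | ring1
      | linear_combination ((-1/4)*rexp (t/2)*rexp (-(t/2))*rexp (-s)^4 + (1/2)*rexp (t/2)*rexp (-(t/2))*rexp s^2*rexp (-s)^2 + (-1/4)*rexp (t/2)*rexp (-(t/2))*rexp s^4) * hcd + ((-1/4)*rexp (-s)^4 + (1/2)*rexp s^2*rexp (-s)^2 + (-1/4)*rexp s^4) * huU + ((1) + (1)*rexp s*rexp (-s)) * hvV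
      | linear_combination ((-1/4)*rexp (t/2)*rexp (-(t/2))^2*rexp (-s)^4*Real.cos (ϑ/2) + (1/4)*rexp (t/2)*rexp (-(t/2))^2*rexp s^4*Real.cos (ϑ/2)) * hcd + ((-1/4)*rexp (-(t/2))*rexp (-s)^4*Real.cos (ϑ/2) + (1/4)*rexp (-(t/2))*rexp s^4*Real.cos (ϑ/2)) * huU
      | linear_combination ((-1/4)*rexp (t/2)^2*rexp (-(t/2))*rexp (-s)^4*Real.sin (ϑ/2) + (1/4)*rexp (t/2)^2*rexp (-(t/2))*rexp s^4*Real.sin (ϑ/2)) * hcd + ((-1/4)*rexp (t/2)*rexp (-s)^4*Real.sin (ϑ/2) + (1/4)*rexp (t/2)*rexp s^4*Real.sin (ϑ/2)) * huU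
      | linear_combination ((1/4)*rexp (t/2)^2*rexp (-(t/2))*rexp (-s)^4*Real.cos (ϑ/2) + (-1/4)*rexp (t/2)^2*rexp (-(t/2))*rexp s^4*Real.cos (ϑ/2)) * hcd + ((1/4)*rexp (t/2)*rexp (-s)^4*Real.cos (ϑ/2) + (-1/4)*rexp (t/2)*rexp s^4*Real.cos (ϑ/2)) * huU
      | linear_combination ((-1/4)*rexp (t/2)*rexp (-(t/2))*rexp (-s)^4 + (1/2)*rexp (t/2)*rexp (-(t/2))*rexp s^2*rexp (-s)^2 + (-1/4)*rexp (t/2)*rexp (-(t/2))*rexp s^4 + (1)*rexp (t/2)^2*rexp (-(t/2))^2*Real.sin (ϑ/2)^2 + (1/4)*rexp (t/2)^2*rexp (-(t/2))^2*rexp (-s)^4 + (1/4)*rexp (t/2)^2*rexp (-(t/2))^2*rexp (-s)^4*Real.cos (ϑ/2)^2 + (1/2)*rexp (t/2)^2*rexp (-(t/2))^2*rexp s^2*rexp (-s)^2 + (1/2)*rexp (t/2)^2*rexp (-(t/2))^2*rexp s^2*rexp (-s)^2*Real.cos (ϑ/2)^2 + (1/4)*rexp (t/2)^2*rexp (-(t/2))^2*rexp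 s^4 + (1/4)*rexp (t/2)^2*rexp (-(t/2))^2*rexp s^4*Real.cos (ϑ/2)^2) * hcd + ((1)*Real.sin (ϑ/2)^2 + (1)*rexp s^2*rexp (-s)^2 + (-1)*rexp s^2*rexp (-s)^2*Real.sin (ϑ/2)^2 + (1)*rexp (t/2)*rexp (-(t/2))*Real.sin (ϑ/2)^2 + (1/4)*rexp (t/2)*rexp (-(t/2))*rexp (-s)^4 + (-1/4)*rexp (t/2)*rexp (-(t/2))*rexp (-s)^4*Real.sin (ϑ/2)^2 + (1/2)*rexp (t/2)*rexp (-(t/2))*rexp s^2*rexp (-s)^2 + (-1/2)*rexp (t/2)*rexp (-(t/2))*rexp s^2*rexp (-s)^2*Real.sin (ϑ/2)^2 + (1/4)*rexp (t/2)*rexp (-(t/2))*rexp s^4 + (-1/4)*rexp (t/2)*rexp (-(t/2))*rexp s^4*Real.sin (ϑ/2)^2) * huU + ((1) + (-1)*Real.sin (ϑ/2)^2 + (1)*rexp s*rexp (-s) + (-1)*rexp s*rexp (-s)*Real.sin (ϑ/2)^2) * hvV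
      | linear_combination ((-1)*rexp (t/2)^3*rexp (-(t/2))*Real.cos (ϑ/2)*Real.sin (ϑ/2) + (1/4)*rexp (t/2)^3*rexp (-(t/2))*rexp (-s)^4*Real.cos (ϑ/2)*Real.sin (ϑ/2) + (1/2)*rexp (t/2)^3*rexp (-(t/2))*rexp s^2*rexp (-s)^2*Real.cos (ϑ/2)*Real.sin (ϑ/2) + (1/4)*rexp (t/2)^3*rexp (-(t/2))*rexp s^4*Real.cos (ϑ/2)*Real.sin (ϑ/2)) * hcd + ((-1)*rexp (t/2)^2*Real.cos (ϑ/2)*Real.sin (ϑ/2) + (1/4)*rexp (t/2)^2*rexp (-s)^4*Real.cos (ϑ/2)*Real.sin (ϑ/2) + (1/2)*rexp (t/2)^2*rexp s^2*rexp (-s)^2*Real.cos (ϑ/2)*Real.sin (ϑ/2) + (1/4)*rexp (t/2)^2*rexp s^4*Real.cos (ϑ/2)*Real.sin (ϑ/2)) * huU + ((1)*rexp (t/2)^2*Real.cos (ϑ/2)*Real.sin (ϑ/2) + (1)*rexp (t/2)^2*rexp s*rexp (-s)*Real.cos (ϑ/2)*Real.sin (ϑ/2)) * hvV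
      | linear_combination ((1/4)*rexp (t/2)*rexp (-(t/2))^2*rexp (-s)^4*Real.sin (ϑ/2) + (-1/4)*rexp (t/2)*rexp (-(t/2))^2*rexp s^4*Real.sin (ϑ/2)) * hcd + ((1/4)*rexp (-(t/2))*rexp (-s)^4*Real.sin (ϑ/2) + (-1/4)*rexp (-(t/2))*rexp s^4*Real.sin (ϑ/2)) * huU
      | linear_combination ((-1)*rexp (t/2)*rexp (-(t/2))^3*Real.cos (ϑ/2)*Real.sin (ϑ/2) + (1/4)*rexp (t/2)*rexp (-(t/2))^3*rexp (-s)^4*Real.cos (ϑ/2)*Real.sin (ϑ/2) + (1/2)*rexp (t/2)*rexp (-(t/2))^3*rexp s^2*rexp (-s)^2*Real.cos (ϑ/2)*Real.sin (ϑ/2) + (1/4)*rexp (t/2)*rexp (-(t/2))^3*rexp s^4*Real.cos (ϑ/2)*Real.sin (ϑ/2)) * hcd + ((-1)*rexp (-(t/2))^2*Real.cos (ϑ/2)*Real.sin (ϑ/2) + (1/4)*rexp (-(t/2))^2*rexp (-s)^4*Real.cos (ϑ/2)*Real.sin (ϑ/2) + (1/2)*rexp (-(t/2))^2*rexp s^2*rexp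 (-s)^2*Real.cos (ϑ/2)*Real.sin (ϑ/2) + (1/4)*rexp (-(t/2))^2*rexp s^4*Real.cos (ϑ/2)*Real.sin (ϑ/2)) * huU + ((1)*rexp (-(t/2))^2*Real.cos (ϑ/2)*Real.sin (ϑ/2) + (1)*rexp (-(t/2))^2*rexp s*rexp (-s)*Real.cos (ϑ/2)*Real.sin (ϑ/2)) * hvV
      | linear_combination ((1)*rexp (t/2)^2*rexp (-(t/2))^2 + (1)*rexp (t/2)^2*rexp (-(t/2))^2*Real.cos (ϑ/2)^2 + (1/4)*rexp (t/2)^2*rexp (-(t/2))^2*rexp (-s)^4*Real.sin (ϑ/2)^2 + (1/2)*rexp (t/2)^2*rexp (-(t/2))^2*rexp s^2*rexp (-s)^2*Real.sin (ϑ/2)^2 + (1/4)*rexp (t/2)^2*rexp (-(t/2))^2*rexp s^4*Real.sin (ϑ/2)^2) * hcd + ((1) + (-1)*Real.sin (ϑ/2)^2 + (1)*rexp s^2*rexp (-s)^2*Real.sin (ϑ/2)^2 + (1)*rexp (t/2)*rexp (-(t/2)) + (-1)*rexp (t/2)*rexp (-(t/2))*Real.sin (ϑ/2)^2 + (1/4)*rexp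 (t/2)*rexp (-(t/2))*rexp (-s)^4*Real.sin (ϑ/2)^2 + (1/2)*rexp (t/2)*rexp (-(t/2))*rexp s^2*rexp (-s)^2*Real.sin (ϑ/2)^2 + (1/4)*rexp (t/2)*rexp (-(t/2))*rexp s^4*Real.sin (ϑ/2)^2) * huU + ((1)*Real.sin (ϑ/2)^2 + (1)*rexp s*rexp (-s)*Real.sin (ϑ/2)^2) * hvV
  have hinv : (C * Cᵀ)⁻¹ =
    !![((1/2)*rexp (-s)^2 + (1/2)*rexp s^2), ((1/2)*rexp (-(t/2))*rexp (-s)^2*Real.cos (ϑ/2) + (-1/2)*rexp (-(t/2))*rexp s^2*Real.cos (ϑ/2)), ((1/2)*rexp (t/2)*rexp (-s)^2*Real.sin (ϑ/2) + (-1/2)*rexp (t/2)*rexp s^2*Real.sin (ϑ/2));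
      ((1/2)*rexp (-(t/2))*rexp (-s)^2*Real.cos (ϑ/2) + (-1/2)*rexp (-(t/2))*rexp s^2*Real.cos (ϑ/2)), ((1)*rexp (-(t/2))^2*Real.sin (ϑ/2)^2 + (1/2)*rexp (-(t/2))^2*rexp (-s)^2*Real.cos (ϑ/2)^2 + (1/2)*rexp (-(t/2))^2*rexp s^2*Real.cos (ϑ/2)^2), ((-1)*rexp (t/2)*rexp (-(t/2))*Real.cos (ϑ/2)*Real.sin (ϑ/2) + (1/2)*rexp (t/2)*rexp (-(t/2))*rexp (-s)^2*Real.cos (ϑ/2)*Real.sin (ϑ/2) + (1/2)*rexp (t/2)*rexp (-(t/2))*rexp s^2*Real.cos (ϑ/2)*Real.sin (ϑ/2));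
      ((1/2)*rexp (t/2)*rexp (-s)^2*Real.sin (ϑ/2) + (-1/2)*rexp (t/2)*rexp s^2*Real.sin (ϑ/2)), ((-1)*rexp (t/2)*rexp (-(t/2))*Real.cos (ϑ/2)*Real.sin (ϑ/2) + (1/2)*rexp (t/2)*rexp (-(t/2))*rexp (-s)^2*Real.cos (ϑ/2)*Real.sin (ϑ/2) + (1/2)*rexp (t/2)*rexp (-(t/2))*rexp s^2*Real.cos (ϑ/2)*Real.sin (ϑ/2)), ((1)*rexp (t/2)^2*Real.cos (ϑ/2)^2 + (1/2)*rexp (t/2)^2*rexp (-s)^2*Real.sin (ϑ/2)^2 + (1/2)*rexp (t/2)^2*rexp s^2*Real.sin (ϑ/2)^2)] :=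
    Matrix.inv_eq_right_inv (by rw [hM]; exact hN1)
  rw [hinv, hM, hsin]
  simp [Matrix.trace_fin_three, Matrix.mul_apply, Fin.sum_univ_three, R, hcosP,
    Real.cosh_eq, Real.sinh_eq, e2s, e2s', e2t, e2t', et, et',
    Matrix.vecHead, Matrix.vecTail]
  linear_combination ((-1)*rexp (-(t/2))^4*Real.cos (ϑ/2)^2*Real.sin (ϑ/2)^2 + (-1/2)*rexp (-(t/2))^4*rexp (-s)^2*Real.sin (ϑ/2)^4 + (-1/2)*rexp (-(t/2))^4*rexp (-s)^2*Real.cos (ϑ/2)^4 + (-1/4)*rexp (-(t/2))^4*rexp (-s)^4*Real.cos (ϑ/2)^2*Real.sin (ϑ/2)^2 + (-1/2)*rexp (-(t/2))^4*rexp s^2*Real.sin (ϑ/2)^4 + (-1/2)*rexp (-(t/2))^4*rexp s^2*Real.cos (ϑ/2)^4 + (-1/2)*rexp (-(t/2))^4*rexp s^2*rexp (-s)^2*Real.cos (ϑ/2)^2*Real.sin (ϑ/2)^2 + (-1/4)*rexp (-(t/2))^4*rexp s^4*Real.cos (ϑ/2)^2*Real.sin (ϑ/2)^2 + (2)*rexp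 (t/2)^2*rexp (-(t/2))^2*Real.cos (ϑ/2)^2*Real.sin (ϑ/2)^2 + (-2)*rexp (t/2)^2*rexp (-(t/2))^2*rexp (-s)^2*Real.cos (ϑ/2)^2*Real.sin (ϑ/2)^2 + (1/2)*rexp (t/2)^2*rexp (-(t/2))^2*rexp (-s)^4*Real.cos (ϑ/2)^2*Real.sin (ϑ/2)^2 + (-2)*rexp (t/2)^2*rexp (-(t/2))^2*rexp s^2*Real.cos (ϑ/2)^2*Real.sin (ϑ/2)^2 + (1)*rexp (t/2)^2*rexp (-(t/2))^2*rexp s^2*rexp (-s)^2*Real.cos (ϑ/2)^2*Real.sin (ϑ/2)^2 + (1/2)*rexp (t/2)^2*rexp (-(t/2))^2*rexp s^4*Real.cos (ϑ/2)^2*Real.sin (ϑ/2)^2 + (-1)*rexp (t/2)^4*Real.cos (ϑ/2)^2*Real.sin (ϑ/2)^2 + (-1/2)*rexp (t/2)^4*rexp (-s)^2*Real.sin (ϑ/2)^4 + (-1/2)*rexp (t/2)^4*rexp (-s)^2*Real.cos (ϑ/2)^4 + (-1/4)*rexp (t/2)^4*rexp (-s)^4*Real.cos (ϑ/2)^2*Real.sin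 (ϑ/2)^2 + (-1/2)*rexp (t/2)^4*rexp s^2*Real.sin (ϑ/2)^4 + (-1/2)*rexp (t/2)^4*rexp s^2*Real.cos (ϑ/2)^4 + (-1/2)*rexp (t/2)^4*rexp s^2*rexp (-s)^2*Real.cos (ϑ/2)^2*Real.sin (ϑ/2)^2 + (-1/4)*rexp (t/2)^4*rexp s^4*Real.cos (ϑ/2)^2*Real.sin (ϑ/2)^2) * hq +
      ((-3/4)*rexp (-(t/2))^4*Real.sin (ϑ/2)^2 + (-3/8)*rexp (-(t/2))^4*rexp (-s)^2 + (3/8)*rexp (-(t/2))^4*rexp (-s)^2*Real.sin (ϑ/2)^2 + (-3/8)*rexp (-(t/2))^4*rexp (-s)^2*Real.cos (ϑ/2)^2 + (-3/4)*rexp (-(t/2))^4*rexp s*rexp (-s)^3*Real.sin (ϑ/2)^2 + (-3/8)*rexp (-(t/2))^4*rexp s^2 + (3/8)*rexp (-(t/2))^4*rexp s^2*Real.sin (ϑ/2)^2 + (-3/8)*rexp (-(t/2))^4*rexp s^2*Real.cos (ϑ/2)^2 + (3/4)*rexp (-(t/2))^4*rexp s^2*rexp (-s)^2*Real.sin (ϑ/2)^2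 + (-3/4)*rexp (-(t/2))^4*rexp s^3*rexp (-s)*Real.sin (ϑ/2)^2 + (1/4)*rexp (t/2)*rexp (-(t/2))*rexp (-s)^4 + (-1/2)*rexp (t/2)*rexp (-(t/2))*rexp s^2*rexp (-s)^2 + (1/4)*rexp (t/2)*rexp (-(t/2))*rexp s^4 + (1/4)*rexp (t/2)^2*rexp (-(t/2))^2 + (7/4)*rexp (t/2)^2*rexp (-(t/2))^2*Real.sin (ϑ/2)^2 + (1/4)*rexp (t/2)^2*rexp (-(t/2))^2*Real.cos (ϑ/2)^2 + (-3/2)*rexp (t/2)^2*rexp (-(t/2))^2*rexp (-s)^2*Real.sin (ϑ/2)^2 + (1/16)*rexp (t/2)^2*rexp (-(t/2))^2*rexp (-s)^4 + (1/16)*rexp (t/2)^2*rexp (-(t/2))^2*rexp (-s)^4*Real.sin (ϑ/2)^2 + (1/16)*rexp (t/2)^2*rexp (-(t/2))^2*rexp (-s)^4*Real.cos (ϑ/2)^2 + (3/2)*rexp (t/2)^2*rexp (-(t/2))^2*rexp s*rexp (-s)^3*Real.sin (ϑ/2)^2 + (-3/2)*rexp (t/2)^2*rexp (-(t/2))^2*rexp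 s^2*Real.sin (ϑ/2)^2 + (1/8)*rexp (t/2)^2*rexp (-(t/2))^2*rexp s^2*rexp (-s)^2 + (-11/8)*rexp (t/2)^2*rexp (-(t/2))^2*rexp s^2*rexp (-s)^2*Real.sin (ϑ/2)^2 + (1/8)*rexp (t/2)^2*rexp (-(t/2))^2*rexp s^2*rexp (-s)^2*Real.cos (ϑ/2)^2 + (3/2)*rexp (t/2)^2*rexp (-(t/2))^2*rexp s^3*rexp (-s)*Real.sin (ϑ/2)^2 + (1/16)*rexp (t/2)^2*rexp (-(t/2))^2*rexp s^4 + (1/16)*rexp (t/2)^2*rexp (-(t/2))^2*rexp s^4*Real.sin (ϑ/2)^2 + (1/16)*rexp (t/2)^2*rexp (-(t/2))^2*rexp s^4*Real.cos (ϑ/2)^2 + (-3/4)*rexp (t/2)^4*Real.sin (ϑ/2)^2 + (-3/8)*rexp (t/2)^4*rexp (-s)^2 + (3/8)*rexp (t/2)^4*rexp (-s)^2*Real.sin (ϑ/2)^2 + (-3/8)*rexp (t/2)^4*rexp (-s)^2*Real.cos (ϑ/2)^2 + (-3/4)*rexp (t/2)^4*rexp s*rexp (-s)^3*Real.sin (ϑ/2)^2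 + (-3/8)*rexp (t/2)^4*rexp s^2 + (3/8)*rexp (t/2)^4*rexp s^2*Real.sin (ϑ/2)^2 + (-3/8)*rexp (t/2)^4*rexp s^2*Real.cos (ϑ/2)^2 + (3/4)*rexp (t/2)^4*rexp s^2*rexp (-s)^2*Real.sin (ϑ/2)^2 + (-3/4)*rexp (t/2)^4*rexp s^3*rexp (-s)*Real.sin (ϑ/2)^2) * hcd +
      ((1/4) + (3/2)*Real.sin (ϑ/2)^2 + (-3/2)*Real.sin (ϑ/2)^4 + (-3/2)*rexp (-s)^2*Real.sin (ϑ/2)^2 + (3/2)*rexp (-s)^2*Real.sin (ϑ/2)^4 + (5/16)*rexp (-s)^4 + (3/2)*rexp s*rexp (-s)^3*Real.sin (ϑ/2)^2 + (-3/2)*rexp s*rexp (-s)^3*Real.sin (ϑ/2)^4 + (-3/2)*rexp s^2*Real.sin (ϑ/2)^2 + (3/2)*rexp s^2*Real.sin (ϑ/2)^4 + (-3/8)*rexp s^2*rexp (-s)^2 + (-3/2)*rexp s^2*rexp (-s)^2*Real.sin (ϑ/2)^2 + (3/2)*rexp s^2*rexp (-s)^2*Real.sin (ϑ/2)^4 +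 (3/2)*rexp s^3*rexp (-s)*Real.sin (ϑ/2)^2 + (-3/2)*rexp s^3*rexp (-s)*Real.sin (ϑ/2)^4 + (5/16)*rexp s^4 + (1/4)*rexp (t/2)*rexp (-(t/2)) + (3/2)*rexp (t/2)*rexp (-(t/2))*Real.sin (ϑ/2)^2 + (-3/2)*rexp (t/2)*rexp (-(t/2))*Real.sin (ϑ/2)^4 + (-3/2)*rexp (t/2)*rexp (-(t/2))*rexp (-s)^2*Real.sin (ϑ/2)^2 + (3/2)*rexp (t/2)*rexp (-(t/2))*rexp (-s)^2*Real.sin (ϑ/2)^4 + (1/16)*rexp (t/2)*rexp (-(t/2))*rexp (-s)^4 + (3/2)*rexp (t/2)*rexp (-(t/2))*rexp s*rexp (-s)^3*Real.sin (ϑ/2)^2 + (-3/2)*rexp (t/2)*rexp (-(t/2))*rexp s*rexp (-s)^3*Real.sin (ϑ/2)^4 + (-3/2)*rexp (t/2)*rexp (-(t/2))*rexp s^2*Real.sin (ϑ/2)^2 + (3/2)*rexp (t/2)*rexp (-(t/2))*rexp s^2*Real.sin (ϑ/2)^4 + (1/8)*rexp (t/2)*rexp (-(t/2))*rexp s^2*rexp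 (-s)^2 + (-3/2)*rexp (t/2)*rexp (-(t/2))*rexp s^2*rexp (-s)^2*Real.sin (ϑ/2)^2 + (3/2)*rexp (t/2)*rexp (-(t/2))*rexp s^2*rexp (-s)^2*Real.sin (ϑ/2)^4 + (3/2)*rexp (t/2)*rexp (-(t/2))*rexp s^3*rexp (-s)*Real.sin (ϑ/2)^2 + (-3/2)*rexp (t/2)*rexp (-(t/2))*rexp s^3*rexp (-s)*Real.sin (ϑ/2)^4 + (1/16)*rexp (t/2)*rexp (-(t/2))*rexp s^4) * huU +
      ((-1) + (-3/2)*Real.sin (ϑ/2)^2 + (3/2)*Real.sin (ϑ/2)^4 + (3/2)*rexp (-s)^2*Real.sin (ϑ/2)^2 + (-3/2)*rexp (-s)^2*Real.sin (ϑ/2)^4 + (-1)*rexp s*rexp (-s) + (-3/2)*rexp s*rexp (-s)*Real.sin (ϑ/2)^2 + (3/2)*rexp s*rexp (-s)*Real.sin (ϑ/2)^4 + (3/2)*rexp s^2*Real.sin (ϑ/2)^2 + (-3/2)*rexp s^2*Real.sin (ϑ/2)^4 + (3/4)*rexp (-(t/2))^4*Real.sin (ϑ/2)^2 + (-3/4)*rexp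 (-(t/2))^4*Real.sin (ϑ/2)^4 + (-3/4)*rexp (-(t/2))^4*rexp (-s)^2*Real.sin (ϑ/2)^2 + (3/4)*rexp (-(t/2))^4*rexp (-s)^2*Real.sin (ϑ/2)^4 + (3/4)*rexp (-(t/2))^4*rexp s*rexp (-s)*Real.sin (ϑ/2)^2 + (-3/4)*rexp (-(t/2))^4*rexp s*rexp (-s)*Real.sin (ϑ/2)^4 + (-3/4)*rexp (-(t/2))^4*rexp s^2*Real.sin (ϑ/2)^2 + (3/4)*rexp (-(t/2))^4*rexp s^2*Real.sin (ϑ/2)^4 + (3/4)*rexp (t/2)^4*Real.sin (ϑ/2)^2 + (-3/4)*rexp (t/2)^4*Real.sin (ϑ/2)^4 + (-3/4)*rexp (t/2)^4*rexp (-s)^2*Real.sin (ϑ/2)^2 + (3/4)*rexp (t/2)^4*rexp (-s)^2*Real.sin (ϑ/2)^4 + (3/4)*rexp (t/2)^4*rexp s*rexp (-s)*Real.sin (ϑ/2)^2 + (-3/4)*rexp (t/2)^4*rexp s*rexp (-s)*Real.sin (ϑ/2)^4 + (-3/4)*rexp (t/2)^4*rexp s^2*Real.sin (ϑ/2)^2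 + (3/4)*rexp (t/2)^4*rexp s^2*Real.sin (ϑ/2)^4) * hvV
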